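/- Let C, A_1, …, A_m, B_1, …, B_l be real symmetric n×n matrices, b, y ∈ ℝ^m, d ∈ ℝ^l, σ ≥ 0, z ∈ ℝ^l. Define Φ(X) = ⟨C, X⟩ − yᵀ(𝒜(X) − b) + (σ/2)‖𝒜(X) − b‖² with 𝒜(X) = (⟨A_i, X⟩)_i, G(X) = C − Σ_i y_i A_i + σ Σ_i (⟨A_i, X⟩ − b_i)A_i, and ℳ = {X : X positive semidefinite, ⟨B_j, X⟩ = d_j for all j}. Let Y ∈ ℝ^{n×p} with rank(Y) < p and X = YYᵀ ∈ ℳ, and set S = G(X) − Σ_{j=1}^l z_j B_j. Suppose S·Y = 0 (first-order criticality) and Tr(UᵀSU) ≥ 0 for every U ∈ ℝ^{n×p} with U·Yᵀ = 0 (second-order condition). Then S is positive semidefinite, X·S = 0, and X minimizes Φ over ℳ: Φ(X′) ≥ Φ(X) for all X′ ∈ ℳ. -/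

import Mathlib

open Matrix BigOperators Finset

private lemma psd_trace_mul_nonneg {n : ℕ} (S X' : Matrix (Fin n) (Fin n) ℝ)
    (hS : S.PosSemidef) (hX : X'.PosSemidef) : 0 ≤ (S * X').trace := by
  obtain ⟨N, rfl⟩ : ∃ N : Matrix (Fin n) (Fin n) ℝ, X' = Nᴴ * N := by
    open scoped MatrixOrder in exact CStarAlgebra.nonneg_iff_eq_star_mul_self.mp hX.nonneg
  rw [← Matrix.mul_assoc, Matrix.trace_mul_cycle]
  have h := hS.mul_mul_conjTranspose_same N
  have hd : ∀ i, 0 ≤ (N * S * Nᴴ) i i := by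
    intro i
    have := h.dotProduct_mulVec_nonneg (Pi.single i 1)
    simpa [dotProduct, Matrix.mulVec, Pi.single_apply] using this
  exact Finset.sum_nonneg fun i _ => hd i

private lemma exists_kernel_vec {n p : ℕ} (Y : Matrix (Fin n) (Fin p) ℝ) (hrank : Y.rank < p) :
    ∃ w : Fin p → ℝ, w ≠ 0 ∧ Y *ᵥ w = 0 := by
  by_contra h
  push_neg at h
  have hker : LinearMap.ker Y.mulVecLin = ⊥ := by
    rw [LinearMap.ker_eq_bot']
    intro w hw
    by_contra hw0
    exact (h w hw0) (by simpa using hw)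
  have := LinearMap.finrank_range_add_finrank_ker Y.mulVecLin
  rw [hker, finrank_bot] at this
  simp [Matrix.rank, Module.finrank_pi] at hrank this
  omega

private lemma trace_vecMulVec_conj {n p : ℕ} (S : Matrix (Fin n) (Fin n) ℝ) (hsym : S.IsSymm)
    (x : Fin n → ℝ) (w : Fin p → ℝ) :
    ((vecMulVec x w)ᵀ * S * (vecMulVec x w)).trace = (∑ j, w j * w j) * (x ⬝ᵥ S *ᵥ x) := by
  have hS' : ∀ a c : Fin n, S c a = S a c := Matrix.IsSymm.apply hsym
  simp only [Matrix.trace, Matrix.diag, Matrix.mul_apply, vecMulVec_apply,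
    Matrix.transpose_apply, dotProduct, Matrix.mulVec, Finset.sum_mul, Finset.mul_sum]
  rw [Finset.sum_comm]
  apply Finset.sum_congr rfl; intro a _
  rw [Finset.sum_comm]
  apply Finset.sum_congr rfl; intro j _
  apply Finset.sum_congr rfl; intro b _
  rw [hS' a j]
  ring

/-- Theorem 4.7: a rank-deficient second-order critical point of the Burer–Monteiro
factorized subproblem provides a global minimizer of the convex ALM subproblem over
`ℳ = {X ⪰ 0 : ⟨B j, X⟩ = d j}`: `S ⪰ 0`, `X·S = 0`, and `X` minimizes `Φ` over `ℳ`.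
Here `⟨A, B⟩ = Tr(AB)`. -/
theorem rank_deficient_second_order_critical_point
    (n m l p : ℕ)
    (C : Matrix (Fin n) (Fin n) ℝ) (A : Fin m → Matrix (Fin n) (Fin n) ℝ)
    (B : Fin l → Matrix (Fin n) (Fin n) ℝ)
    (b y : Fin m → ℝ) (d : Fin l → ℝ) (σ : ℝ) (hσ : 0 ≤ σ) (z : Fin l → ℝ)
    (hC : C.IsSymm) (hA : ∀ i, (A i).IsSymm) (hB : ∀ j, (B j).IsSymm)
    (Φ : Matrix (Fin n) (Fin n) ℝ → ℝ)
    (hΦ : ∀ X, Φ X = (C * X).trace - (∑ i, y i * ((A i * X).trace - b i)) +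
      σ / 2 * ∑ i, ((A i * X).trace - b i) ^ 2)
    (G : Matrix (Fin n) (Fin n) ℝ → Matrix (Fin n) (Fin n) ℝ)
    (hG : ∀ X, G X = C - (∑ i, y i • A i) + σ • ∑ i, ((A i * X).trace - b i) • A i)
    (Y : Matrix (Fin n) (Fin p) ℝ) (hrank : Y.rank < p)
    (X : Matrix (Fin n) (Fin n) ℝ) (hX : X = Y * Yᵀ)
    (hXB : ∀ j, (B j * X).trace = d j)
    (S : Matrix (Fin n) (Fin n) ℝ)
    (hS : S = G X - ∑ j, z j • B j)
    (hcrit : S * Y = 0)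
    (hsoc : ∀ U : Matrix (Fin n) (Fin p) ℝ, U * Yᵀ = 0 → 0 ≤ (Uᵀ * S * U).trace) :
    S.PosSemidef ∧ X * S = 0 ∧
      ∀ X' : Matrix (Fin n) (Fin n) ℝ, X'.PosSemidef →
        (∀ j, (B j * X').trace = d j) → Φ X ≤ Φ X' := by
  have hAsym : ∀ i, (A i)ᵀ = A i := fun i => (hA i).eq
  have hBsym : ∀ j, (B j)ᵀ = B j := fun j => (hB j).eq
  -- S is symmetric
  have hSsym : S.IsSymm := by
    show Sᵀ = S
    rw [hS, hG]
    simp [Matrix.transpose_sub, Matrix.transpose_add, Matrix.transpose_smul,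
      Matrix.transpose_sum, hC.eq, hAsym, hBsym]
  -- S is positive semidefinite
  obtain ⟨w, hw0, hYw⟩ := exists_kernel_vec Y hrank
  have hw2 : 0 < ∑ j, w j * w j := by
    obtain ⟨j0, hj0⟩ := Function.ne_iff.mp hw0
    exact Finset.sum_pos' (fun j _ => mul_self_nonneg _)
      ⟨j0, Finset.mem_univ _, mul_self_pos.mpr hj0⟩
  have hpsd : S.PosSemidef := by
    constructor
    · ext i j
      simp only [Matrix.conjTranspose_apply, star_trivial]
      exact Matrix.IsSymm.apply hSsym i j
    · intro x
      have h0 : ∀ k, ∑ j, Y k j * w j = 0 := fun k => by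
        have := congrFun hYw k
        simpa [Matrix.mulVec, dotProduct] using this
      have hU : (vecMulVec x w) * Yᵀ = 0 := by
        ext i k
        rw [Matrix.mul_apply, Matrix.zero_apply]
        calc ∑ j, vecMulVec x w i j * Yᵀ j k
            = x i * ∑ j, Y k j * w j := by
              rw [Finset.mul_sum]
              exact Finset.sum_congr rfl fun j _ => by
                rw [vecMulVec_apply, Matrix.transpose_apply]; ring
          _ = 0 := by rw [h0 k, mul_zero]
      have h1 := hsoc _ hU
      rw [trace_vecMulVec_conj S hSsym x w] at h1
      have h2 : 0 ≤ x ⬝ᵥ S *ᵥ x := nonneg_of_mul_nonneg_right h1 hw2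
      simpa [dotProduct, mulVec, Finsupp.sum_fintype, Finset.mul_sum, mul_assoc] using h2
  -- X * S = 0
  have hXS : X * S = 0 := by
    have hYS : Yᵀ * S = 0 := by
      calc Yᵀ * S = Yᵀ * Sᵀ := by rw [hSsym.eq]
        _ = (S * Y)ᵀ := by rw [Matrix.transpose_mul]
        _ = 0 := by rw [hcrit, Matrix.transpose_zero]
    rw [hX, Matrix.mul_assoc, hYS, Matrix.mul_zero]
  refine ⟨hpsd, hXS, ?_⟩
  -- optimality
  intro X' hX'psd hX'B
  have hexp : ∀ M : Matrix (Fin n) (Fin n) ℝ,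
      (S * M).trace = (C * M).trace - ∑ i, y i * (A i * M).trace
        + σ * ∑ i, ((A i * X).trace - b i) * (A i * M).trace
        - ∑ j, z j * (B j * M).trace := by
    intro M
    rw [hS, hG]
    simp [Matrix.sub_mul, Matrix.add_mul, Matrix.smul_mul, Finset.sum_mul, Matrix.trace_sub,
      Matrix.trace_add, Matrix.trace_smul, Matrix.trace_sum, smul_eq_mul, Finset.mul_sum]
  have hSX : (S * X).trace = 0 := by
    rw [Matrix.trace_mul_comm, hXS, Matrix.trace_zero]
  have hSX' : 0 ≤ (S * X').trace := psd_trace_mul_nonneg S X' hpsd hX'psd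
  -- master identity
  have key : ∑ i, (y i * ((A i * X).trace - b i) - y i * ((A i * X').trace - b i)
        + σ / 2 * ((A i * X').trace - b i) ^ 2 - σ / 2 * ((A i * X).trace - b i) ^ 2)
      = ∑ i, (y i * (A i * X).trace - y i * (A i * X').trace
        + σ * (((A i * X).trace - b i) * (A i * X').trace)
        - σ * (((A i * X).trace - b i) * (A i * X).trace)
        + σ / 2 * ((A i * X').trace - (A i * X).trace) ^ 2) :=
    Finset.sum_congr rfl fun i _ => by ring
  simp only [Finset.sum_add_distrib, Finset.sum_sub_distrib, ← Finset.mul_sum] at key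
  have hsq : 0 ≤ σ / 2 * ∑ i, ((A i * X').trace - (A i * X).trace) ^ 2 := by
    apply mul_nonneg (by linarith)
    exact Finset.sum_nonneg fun i _ => sq_nonneg _
  have e1 := hexp X
  have e2 := hexp X'
  have hz : ∑ j, z j * (B j * X').trace = ∑ j, z j * (B j * X).trace := by
    simp [hXB, hX'B]
  rw [hΦ X, hΦ X']
  rw [e2, hz] at hSX'
  linarith [hSX, hSX', key, hsq]
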